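/- arXiv:1304.6970 — 2 statements merged into one kernel-verified Lean document; each statement's English description precedes it below -/
import Mathlib

section
/- Let A be an essentially small abelian category with finite Hom- and Ext-sets. For objects A, B, C of A, let Ext^1(B,C)_A denote the subset of Ext^1(B,C) of extension classes whose middle term is isomorphic to A, and let g^A_{B,C} denote the number of subobjects C' of A with C' ≅ C and A/C' ≅ B. Then g^A_{B,C} = (|Ext^1(B,C)_A| / |Hom(B,C)|) · (|Aut(A)| / (|Aut(B)| · |Aut(C)|)). -/
open CategoryTheory Limits

section

variable {A : Type*} [Category A] [Abelian A]

/-- An extension of `B` by `C`: a short exact sequence `0 → C → E → B → 0`. -/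
structure ExtensionOf (B C : A) where
  E : A
  ι : C ⟶ E
  π : E ⟶ B
  w : ι ≫ π = 0
  shortExact : (ShortComplex.mk ι π w).ShortExact

/-- Equivalence of extensions: an isomorphism of middle terms commuting with
the structure maps. -/
def ExtensionOf.Equiv {B C : A} (e e' : ExtensionOf B C) : Prop :=
  ∃ φ : e.E ≅ e'.E, e.ι ≫ φ.hom = e'.ι ∧ φ.hom ≫ e'.π = e.π

def extensionSetoid (B C : A) : Setoid (ExtensionOf B C) where
  r := ExtensionOf.Equiv
  iseqv := by
    constructor
    · intro e; exact ⟨Iso.refl _, by simp, by simp⟩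
    · rintro e e' ⟨φ, h₁, h₂⟩
      refine ⟨φ.symm, ?_, ?_⟩
      · rw [← h₁]; simp
      · rw [← h₂]; simp
    · rintro e e' e'' ⟨φ, h₁, h₂⟩ ⟨ψ, h₃, h₄⟩
      refine ⟨φ.trans ψ, ?_, ?_⟩
      · simp only [Iso.trans_hom, ← Category.assoc, h₁, h₃]
      · simp only [Iso.trans_hom, Category.assoc, h₄, h₂]

/-- `Ext¹(B, C)_A₀`: the set of equivalence classes of extensions of `B` by `C`
whose middle term is isomorphic to `A₀`. -/
def ExtClassesWithMiddle (B C A₀ : A) : Type _ :=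
  Quotient (Setoid.comap (Subtype.val : {e : ExtensionOf B C // Nonempty (e.E ≅ A₀)} → _)
    (extensionSetoid B C))

/-- The Hall number `g^A₀_{B,C}`: the number of subobjects `C' ⊆ A₀` with
`C' ≅ C` and `A₀ / C' ≅ B`. -/
noncomputable def hallNumber (A₀ B C : A) : ℕ :=
  Nat.card {S : Subobject A₀ // Nonempty ((S : A) ≅ C) ∧ Nonempty (cokernel S.arrow ≅ B)}

end

/-! Riedtmann's counting argument. Let `W` be the set of pairs `(ι, π)` forming a short exact
sequence `0 → C → A₀ → B → 0`. The group `Aut B × Aut C` acts freely on `W` and the orbits are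
the subobjects counted by `g^{A₀}_{B,C}` (via the image of `ι`), so `|W| = g · |Aut B| · |Aut C|`.
The group `Aut A₀` acts on `W` with orbits the extension classes with middle term `A₀`, and the
stabiliser of `(ι, π)` consists of the automorphisms `1 + π f ι` with `f : B ⟶ C`, so
`|Ext¹(B,C)_{A₀}| · |Aut A₀| = |W| · |Hom(B,C)|`. -/

namespace MulAction

theorem card_orbitRel_quotient_mul_card_group {G X H : Type*} [Group G] [MulAction G X]
    (e : ∀ x : X, stabilizer G x ≃ H) :
    Nat.card (orbitRel.Quotient G X) * Nat.card G = Nat.card X * Nat.card H := by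
  rw [← Nat.card_prod, ← Nat.card_prod]
  exact Nat.card_congr <|
    calc orbitRel.Quotient G X × G
        ≃ Σ _ : orbitRel.Quotient G X, G := (Equiv.sigmaEquivProd _ _).symm
      _ ≃ Σ ω : orbitRel.Quotient G X, orbit G ω.out × H :=
          Equiv.sigmaCongrRight fun ω =>
            (orbitProdStabilizerEquivGroup G ω.out).symm.trans
              (Equiv.prodCongr (Equiv.refl _) (e _))
      _ ≃ (Σ ω : orbitRel.Quotient G X, orbit G ω.out) × H := (Equiv.sigmaProdDistrib _ _).symm
      _ ≃ X × H := Equiv.prodCongr (selfEquivSigmaOrbits G X).symm (Equiv.refl H)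

noncomputable def orbitRelQuotientEquivOfFibers {G X Y : Type*} [Group G] [MulAction G X]
    (f : X → Y) (hf : Function.Surjective f) (hfib : ∀ x y, f x = f y ↔ ∃ g : G, g • x = y) :
    orbitRel.Quotient G X ≃ Y :=
  (Quotient.congrRight fun x y => by
      rw [orbitRel_apply, mem_orbit_iff, Setoid.ker_def, ← hfib, eq_comm]).trans
    (Setoid.quotientKerEquivOfSurjective f hf)

end MulAction

instance CategoryTheory.Aut.finite {A : Type*} [Category A] {X : A} [Finite (X ⟶ X)] :
    Finite (Aut X) :=
  Finite.of_injective (fun φ : Aut X => φ.hom) fun _ _ => Aut.ext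

section

variable {A : Type*} [Category A] [Abelian A]

@[ext]
structure ShortExactWithMiddle (B C A₀ : A) where
  ι : C ⟶ A₀
  π : A₀ ⟶ B
  w : ι ≫ π = 0
  shortExact : (ShortComplex.mk ι π w).ShortExact

namespace ShortExactWithMiddle

variable {B C A₀ : A}

instance (s : ShortExactWithMiddle B C A₀) : Mono s.ι := s.shortExact.mono_f

instance (s : ShortExactWithMiddle B C A₀) : Epi s.π := s.shortExact.epi_g

def ofShortExact {X₁ X₂ X₃ : A} {f : X₁ ⟶ X₂} {g : X₂ ⟶ X₃} {w : f ≫ g = 0}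
    (h : (ShortComplex.mk f g w).ShortExact) (γ : C ≅ X₁) (φ : X₂ ≅ A₀) (β : X₃ ≅ B) :
    ShortExactWithMiddle B C A₀ where
  ι := γ.hom ≫ f ≫ φ.hom
  π := φ.inv ≫ g ≫ β.hom
  w := by simp [reassoc_of% w]
  shortExact :=
    ShortComplex.shortExact_of_iso (ShortComplex.isoMk γ.symm φ β (by simp) (by simp)) h

lemma exists_π_comp_comp_ι_eq (s : ShortExactWithMiddle B C A₀) {h : A₀ ⟶ A₀}
    (h₁ : s.ι ≫ h = 0) (h₂ : h ≫ s.π = 0) : ∃ f : B ⟶ C, s.π ≫ f ≫ s.ι = h := by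
  obtain ⟨g, hg⟩ := CokernelCofork.IsColimit.desc' s.shortExact.gIsCokernel h h₁
  replace hg : s.π ≫ g = h := hg
  have hgπ : g ≫ s.π = 0 := by rw [← cancel_epi s.π, ← Category.assoc, hg, h₂, comp_zero]
  obtain ⟨f, hf⟩ := KernelFork.IsLimit.lift' s.shortExact.fIsKernel g hgπ
  exact ⟨f, (congrArg (s.π ≫ ·) hf).trans hg⟩

lemma exists_aut_π_comp_eq (s s' : ShortExactWithMiddle B C A₀)
    (h : s.ι ≫ s'.π = 0) (h' : s'.ι ≫ s.π = 0) : ∃ β : Aut B, s.π ≫ β.hom = s'.π := by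
  obtain ⟨b, hb⟩ := CokernelCofork.IsColimit.desc' s.shortExact.gIsCokernel s'.π h
  obtain ⟨b', hb'⟩ := CokernelCofork.IsColimit.desc' s'.shortExact.gIsCokernel s.π h'
  replace hb : s.π ≫ b = s'.π := hb
  replace hb' : s'.π ≫ b' = s.π := hb'
  refine ⟨⟨b, b', ?_, ?_⟩, hb⟩
  · rw [← cancel_epi s.π, reassoc_of% hb, hb', Category.comp_id]
  · rw [← cancel_epi s'.π, reassoc_of% hb', hb, Category.comp_id]

instance : SMul (Aut A₀) (ShortExactWithMiddle B C A₀) where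
  smul φ s := ofShortExact s.shortExact (Iso.refl C) φ (Iso.refl B)

@[simp] lemma aut_smul_ι (φ : Aut A₀) (s : ShortExactWithMiddle B C A₀) :
    (φ • s).ι = s.ι ≫ φ.hom :=
  Category.id_comp _

@[simp] lemma aut_smul_π (φ : Aut A₀) (s : ShortExactWithMiddle B C A₀) :
    (φ • s).π = φ.inv ≫ s.π :=
  congrArg (φ.inv ≫ ·) (Category.comp_id _)

instance : MulAction (Aut A₀) (ShortExactWithMiddle B C A₀) where
  one_smul s := by
    ext <;> simp only [aut_smul_ι, aut_smul_π]; exacts [Category.comp_id _, Category.id_comp _]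
  mul_smul φ ψ s := by
    ext <;> simp only [aut_smul_ι, aut_smul_π]
    exacts [(Category.assoc _ _ _).symm, Category.assoc _ _ _]

lemma mem_stabilizer_aut_iff {s : ShortExactWithMiddle B C A₀} {φ : Aut A₀} :
    φ ∈ MulAction.stabilizer (Aut A₀) s ↔ s.ι ≫ φ.hom = s.ι ∧ φ.hom ≫ s.π = s.π := by
  rw [MulAction.mem_stabilizer_iff, ShortExactWithMiddle.ext_iff, aut_smul_ι, aut_smul_π]
  exact and_congr_right' ((Iso.inv_comp_eq (α := (φ : A₀ ≅ A₀))).trans eq_comm)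

-- An automorphism because `(π ≫ f ≫ ι) ≫ (π ≫ f ≫ ι) = 0`, as `ι ≫ π = 0`.
def transvection (s : ShortExactWithMiddle B C A₀) (f : B ⟶ C) : Aut A₀ where
  hom := 𝟙 A₀ + s.π ≫ f ≫ s.ι
  inv := 𝟙 A₀ - s.π ≫ f ≫ s.ι
  hom_inv_id := by simp [reassoc_of% s.w]
  inv_hom_id := by simp [reassoc_of% s.w]

lemma transvection_mem_stabilizer (s : ShortExactWithMiddle B C A₀) (f : B ⟶ C) :
    s.transvection f ∈ MulAction.stabilizer (Aut A₀) s :=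
  mem_stabilizer_aut_iff.2 ⟨by simp [transvection, reassoc_of% s.w], by simp [transvection, s.w]⟩

lemma transvection_injective (s : ShortExactWithMiddle B C A₀) :
    Function.Injective s.transvection := fun f f' h => by
  have h' : s.π ≫ f ≫ s.ι = s.π ≫ f' ≫ s.ι := add_left_cancel (congrArg Iso.hom h)
  rwa [cancel_epi, cancel_mono] at h'

lemma exists_transvection_eq {s : ShortExactWithMiddle B C A₀} {φ : Aut A₀}
    (hφ : φ ∈ MulAction.stabilizer (Aut A₀) s) : ∃ f, s.transvection f = φ := by
  obtain ⟨hι, hπ⟩ := mem_stabilizer_aut_iff.1 hφ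
  obtain ⟨f, hf⟩ := s.exists_π_comp_comp_ι_eq (h := φ.hom - 𝟙 A₀)
    (by simp [Preadditive.comp_sub, hι]) (by simp [Preadditive.sub_comp, hπ])
  exact ⟨f, Iso.ext (by simp [transvection, hf])⟩

noncomputable def stabilizerAutEquiv (s : ShortExactWithMiddle B C A₀) :
    MulAction.stabilizer (Aut A₀) s ≃ (B ⟶ C) :=
  (Equiv.ofBijective (fun f => ⟨s.transvection f, s.transvection_mem_stabilizer f⟩)
    ⟨fun _ _ h => s.transvection_injective (congrArg Subtype.val h),
      fun ⟨_, hφ⟩ => (exists_transvection_eq hφ).imp fun _ hf => Subtype.ext hf⟩).symm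

instance : SMul (Aut B × Aut C) (ShortExactWithMiddle B C A₀) where
  smul βγ s := ofShortExact s.shortExact βγ.2.symm (Iso.refl A₀) βγ.1

@[simp] lemma prod_smul_ι (βγ : Aut B × Aut C) (s : ShortExactWithMiddle B C A₀) :
    (βγ • s).ι = βγ.2.inv ≫ s.ι :=
  congrArg (βγ.2.inv ≫ ·) (Category.comp_id _)

@[simp] lemma prod_smul_π (βγ : Aut B × Aut C) (s : ShortExactWithMiddle B C A₀) :
    (βγ • s).π = s.π ≫ βγ.1.hom :=
  Category.id_comp _

instance : MulAction (Aut B × Aut C) (ShortExactWithMiddle B C A₀) where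
  one_smul s := by
    ext <;> simp only [prod_smul_ι, prod_smul_π]; exacts [Category.id_comp _, Category.comp_id _]
  mul_smul βγ βγ' s := by
    ext <;> simp only [prod_smul_ι, prod_smul_π]
    exacts [Category.assoc _ _ _, (Category.assoc _ _ _).symm]

lemma stabilizer_prod_eq_bot (s : ShortExactWithMiddle B C A₀) :
    MulAction.stabilizer (Aut B × Aut C) s = ⊥ := by
  refine (Subgroup.eq_bot_iff_forall _).2 fun ⟨β, γ⟩ h => ?_
  obtain ⟨hι, hπ⟩ := ShortExactWithMiddle.ext_iff.1 (MulAction.mem_stabilizer_iff.1 h)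
  rw [prod_smul_ι] at hι
  rw [prod_smul_π] at hπ
  have hβ : β = 1 := Aut.ext ((cancel_epi s.π).1 (hπ.trans (Category.comp_id _).symm))
  have hγ : γ⁻¹ = 1 := Aut.ext ((cancel_mono s.ι).1 (hι.trans (Category.id_comp _).symm))
  rw [hβ, inv_eq_one.1 hγ, Prod.mk_one_one]

lemma shortExact_cokernel_π (S : Subobject A₀) :
    (ShortComplex.mk S.arrow (cokernel.π S.arrow) (cokernel.condition _)).ShortExact :=
  ShortComplex.ShortExact.mk' (ShortComplex.exact_of_g_is_cokernel _ (cokernelIsCokernel _))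
    inferInstance inferInstance

noncomputable def hallSubobject (s : ShortExactWithMiddle B C A₀) :
    {S : Subobject A₀ // Nonempty ((S : A) ≅ C) ∧ Nonempty (cokernel S.arrow ≅ B)} :=
  ⟨Subobject.mk s.ι, ⟨Subobject.underlyingIso s.ι⟩,
    ⟨cokernelIsoOfEq (Subobject.underlyingIso_hom_comp_eq_mk s.ι).symm ≪≫
      cokernelEpiComp _ _ ≪≫
      (cokernelIsCokernel s.ι).coconePointUniqueUpToIso s.shortExact.gIsCokernel⟩⟩

lemma hallSubobject_surjective :
    Function.Surjective (hallSubobject : ShortExactWithMiddle B C A₀ → _) := by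
  rintro ⟨S, ⟨c⟩, ⟨b⟩⟩
  refine ⟨ofShortExact (shortExact_cokernel_π S) c.symm (Iso.refl A₀) b, Subtype.ext ?_⟩
  exact Subobject.mk_eq_of_comm _ c.symm (by simp [ofShortExact])

lemma hallSubobject_eq_iff {s s' : ShortExactWithMiddle B C A₀} :
    s.hallSubobject = s'.hallSubobject ↔ ∃ βγ : Aut B × Aut C, βγ • s = s' := by
  refine ⟨fun h => ?_, ?_⟩
  · let u := Subobject.isoOfMkEqMk s.ι s'.ι (congrArg Subtype.val h)
    have hu : u.hom ≫ s'.ι = s.ι := Subobject.ofMkLEMk_comp _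
    obtain ⟨β, hβ⟩ := exists_aut_π_comp_eq s s'
      (by rw [← hu, Category.assoc, s'.w, comp_zero])
      (by rw [← u.inv_hom_id_assoc s'.ι, hu, Category.assoc, s.w, comp_zero])
    exact ⟨(β, u), ShortExactWithMiddle.ext (by simp [← hu]) (by simpa using hβ)⟩
  · rintro ⟨βγ, rfl⟩
    refine Subtype.ext (Subobject.mk_eq_mk_of_comm _ _ βγ.2 ?_)
    rw [prod_smul_ι]
    exact (βγ.2 : C ≅ C).hom_inv_id_assoc s.ι

def extClass (s : ShortExactWithMiddle B C A₀) : ExtClassesWithMiddle B C A₀ :=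
  Quotient.mk _ ⟨⟨A₀, s.ι, s.π, s.w, s.shortExact⟩, ⟨Iso.refl A₀⟩⟩

lemma extClass_surjective :
    Function.Surjective (extClass : ShortExactWithMiddle B C A₀ → _) := by
  rintro ⟨⟨e, ⟨ψ⟩⟩⟩
  exact ⟨ofShortExact e.shortExact (Iso.refl C) ψ (Iso.refl B),
    Quotient.sound ⟨ψ.symm, by simp [ofShortExact], by simp [ofShortExact]⟩⟩

lemma extClass_eq_iff {s s' : ShortExactWithMiddle B C A₀} :
    s.extClass = s'.extClass ↔ ∃ φ : Aut A₀, φ • s = s' := by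
  refine Quotient.eq.trans ?_
  change (∃ φ : Aut A₀, s.ι ≫ φ.hom = s'.ι ∧ φ.hom ≫ s'.π = s.π) ↔ _
  refine exists_congr fun φ => ?_
  rw [ShortExactWithMiddle.ext_iff, aut_smul_ι, aut_smul_π]
  exact and_congr_right' ((Iso.inv_comp_eq (α := (φ : A₀ ≅ A₀))).trans eq_comm).symm

end ShortExactWithMiddle

open ShortExactWithMiddle

theorem hallNumber_mul_card_aut_mul_card_aut (A₀ B C : A) :
    hallNumber A₀ B C * (Nat.card (Aut B) * Nat.card (Aut C)) =
      Nat.card (ShortExactWithMiddle B C A₀) := by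
  rw [hallNumber, ← Nat.card_congr (MulAction.orbitRelQuotientEquivOfFibers hallSubobject
    hallSubobject_surjective fun _ _ => hallSubobject_eq_iff), ← Nat.card_prod,
    MulAction.card_orbitRel_quotient_mul_card_group (H := Unit) fun s =>
      (MulEquiv.subgroupCongr (stabilizer_prod_eq_bot s)).toEquiv.trans (Equiv.equivPUnit _),
    Nat.card_unique (α := Unit), mul_one]

theorem card_extClassesWithMiddle_mul_card_aut (A₀ B C : A) :
    Nat.card (ExtClassesWithMiddle B C A₀) * Nat.card (Aut A₀) =
      Nat.card (ShortExactWithMiddle B C A₀) * Nat.card (B ⟶ C) := by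
  rw [← Nat.card_congr (MulAction.orbitRelQuotientEquivOfFibers extClass extClass_surjective
    fun _ _ => extClass_eq_iff)]
  exact MulAction.card_orbitRel_quotient_mul_card_group stabilizerAutEquiv

end

/-- **Riedtmann–Peng formula.**  In an essentially small abelian
category with finite Hom- and Ext-sets,
`g^A_{B,C} = (|Ext¹(B,C)_A| / |Hom(B,C)|) · (|Aut A| / (|Aut B| · |Aut C|))`. -/
theorem riedtmann_peng_formula
    {A : Type*} [Category A] [Abelian A] [EssentiallySmall A]
    [∀ X Y : A, Fintype (X ⟶ Y)]
    (A₀ B C : A) :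
    (hallNumber A₀ B C : ℚ)
      = ((Nat.card (ExtClassesWithMiddle B C A₀) : ℚ) / (Nat.card (B ⟶ C) : ℚ))
        * ((Nat.card (Aut A₀) : ℚ) / ((Nat.card (Aut B) : ℚ) * (Nat.card (Aut C) : ℚ))) := by
  have hHom : (Nat.card (B ⟶ C) : ℚ) ≠ 0 := by
    have : Nonempty (B ⟶ C) := ⟨0⟩
    exact_mod_cast Nat.card_pos.ne'
  have hB : (Nat.card (Aut B) : ℚ) ≠ 0 := by exact_mod_cast Nat.card_pos.ne'
  have hC : (Nat.card (Aut C) : ℚ) ≠ 0 := by exact_mod_cast Nat.card_pos.ne'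
  have hHall := congrArg (Nat.cast : ℕ → ℚ) (hallNumber_mul_card_aut_mul_card_aut A₀ B C)
  have hExt := congrArg (Nat.cast : ℕ → ℚ) (card_extClassesWithMiddle_mul_card_aut A₀ B C)
  push_cast at hHall hExt
  rw [div_mul_div_comm, eq_div_iff (mul_ne_zero hHom (mul_ne_zero hB hC))]
  linear_combination (Nat.card (B ⟶ C) : ℚ) * hHall - hExt
end

section
/- Let A be a hereditary abelian category with enough projectives and let A ∈ A have minimal projective resolution 0 → P_A → Q_A → A → 0, giving the two-periodic complex C_A = (P_A ⇄ Q_A) with d_1 = f_A (the inclusion) and d_0 = 0. Suppose 0 → N• → C_A → M• → 0 is a short exact sequence in C(P) satisfying the condition: H_i(M•) ≠ 0 implies H_{i+1}(N•) = 0 for i = 0, 1. Then there exist objects B, D of A such that M• ≅ C_B and N• ≅ C_D, where C_B, C_D arise from minimal projective resolutions of B and D. -/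
open CategoryTheory Limits ZeroObject

universe v u

variable (A : Type u) [Category.{v} A] [Abelian A]

/-- A two-periodic (Z/2-graded) complex in `A`. -/
structure TwoComplex : Type max u v where
  X₁ : A
  X₀ : A
  d₁ : X₁ ⟶ X₀
  d₀ : X₀ ⟶ X₁
  w₁₀ : d₁ ≫ d₀ = 0
  w₀₁ : d₀ ≫ d₁ = 0

namespace TwoComplex

variable {A}

@[ext] structure Hom (M N : TwoComplex A) : Type v where
  f₁ : M.X₁ ⟶ N.X₁
  f₀ : M.X₀ ⟶ N.X₀
  comm₁ : M.d₁ ≫ f₀ = f₁ ≫ N.d₁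
  comm₀ : M.d₀ ≫ f₁ = f₀ ≫ N.d₀

instance : Category (TwoComplex A) where
  Hom := Hom
  id M := ⟨𝟙 _, 𝟙 _, by simp, by simp⟩
  comp f g := ⟨f.f₁ ≫ g.f₁, f.f₀ ≫ g.f₀, by
      rw [← Category.assoc, f.comm₁, Category.assoc, g.comm₁, ← Category.assoc], by
      rw [← Category.assoc, f.comm₀, Category.assoc, g.comm₀, ← Category.assoc]⟩
  id_comp f := by apply Hom.ext <;> simp
  comp_id f := by apply Hom.ext <;> simp
  assoc f g h := by apply Hom.ext <;> simp

@[simp] lemma id_f₁ (M : TwoComplex A) : (𝟙 M : Hom M M).f₁ = 𝟙 M.X₁ := rfl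
@[simp] lemma id_f₀ (M : TwoComplex A) : (𝟙 M : Hom M M).f₀ = 𝟙 M.X₀ := rfl
@[simp] lemma comp_f₁ {M N P : TwoComplex A} (f : M ⟶ N) (g : N ⟶ P) :
    (f ≫ g).f₁ = f.f₁ ≫ g.f₁ := rfl
@[simp] lemma comp_f₀ {M N P : TwoComplex A} (f : M ⟶ N) (g : N ⟶ P) :
    (f ≫ g).f₀ = f.f₀ ≫ g.f₀ := rfl

/-- Homology in degree 0 : ker d₀ / im d₁. -/
noncomputable def H₀ (M : TwoComplex A) : A := (ShortComplex.mk M.d₁ M.d₀ M.w₁₀).homology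

/-- Homology in degree 1 : ker d₁ / im d₀. -/
noncomputable def H₁ (M : TwoComplex A) : A := (ShortComplex.mk M.d₀ M.d₁ M.w₀₁).homology

/-- A complex is acyclic if both homologies vanish. -/
def Acyclic (M : TwoComplex A) : Prop := IsZero (H₀ M) ∧ IsZero (H₁ M)

/-- Both terms are projective. -/
def ProjTerms (M : TwoComplex A) : Prop := Projective M.X₁ ∧ Projective M.X₀

/-- The acyclic complex `K_P = (P ⇄ P)` with `d₁ = id`, `d₀ = 0`. -/
def KP (P : A) : TwoComplex A := ⟨P, P, 𝟙 P, 0, by simp, by simp⟩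

/-- The acyclic complex `K_P* = (P ⇄ P)` with `d₁ = 0`, `d₀ = -id`. -/
def KPstar (P : A) : TwoComplex A := ⟨P, P, 0, -𝟙 P, by simp, by simp⟩

/-- Direct sum of two-periodic complexes. -/
noncomputable def dsum (M N : TwoComplex A) : TwoComplex A where
  X₁ := M.X₁ ⊞ N.X₁
  X₀ := M.X₀ ⊞ N.X₀
  d₁ := biprod.map M.d₁ N.d₁
  d₀ := biprod.map M.d₀ N.d₀
  w₁₀ := by ext <;> simp [M.w₁₀, N.w₁₀]
  w₀₁ := by ext <;> simp [M.w₀₁, N.w₀₁]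

/-- The zero complex. -/
noncomputable def zeroCplx : TwoComplex A :=
  ⟨(0 : A) , (0 : A), 0, 0, by simp, by simp⟩

/-- A pair of composable morphisms of two-periodic complexes is a short exact
sequence if it is degreewise a short exact sequence. -/
def IsShortExact {N L M : TwoComplex A} (i : N ⟶ L) (p : L ⟶ M) : Prop :=
  ∃ (w₁ : i.f₁ ≫ p.f₁ = 0) (w₀ : i.f₀ ≫ p.f₀ = 0),
    (ShortComplex.mk i.f₁ p.f₁ w₁).ShortExact ∧ (ShortComplex.mk i.f₀ p.f₀ w₀).ShortExact

/-- The defining condition of the exact structure `E₀`: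
`H_i(M) ≠ 0 → H_{i+1}(N) = 0` for `i = 0, 1`. -/
def E0Cond (N M : TwoComplex A) : Prop :=
  (¬ IsZero (H₀ M) → IsZero (H₁ N)) ∧ (¬ IsZero (H₁ M) → IsZero (H₀ N))

end TwoComplex

open TwoComplex

section

variable {A : Type u} [Category.{v} A] [Abelian A]

/-- An indecomposable object. -/
def Indec (X : A) : Prop :=
  ¬ IsZero X ∧ ∀ Y Z : A, Nonempty (X ≅ Y ⊞ Z) → IsZero Y ∨ IsZero Z

/-- Minimality of a map between projectives: no component of `f` between
indecomposable direct summands is an isomorphism. -/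
def IsMinimalMap {P Q : A} (f : P ⟶ Q) : Prop :=
  ∀ (P₁ P₂ Q₁ Q₂ : A) (eP : P ≅ P₁ ⊞ P₂) (eQ : Q ≅ Q₁ ⊞ Q₂),
    Indec P₁ → Indec Q₁ →
    ¬ IsIso (biprod.inl ≫ eP.inv ≫ f ≫ eQ.hom ≫ biprod.fst)

/-- A projective resolution `0 → P → Q → X → 0` of length one. -/
structure ProjRes (X : A) where
  P : A
  Q : A
  f : P ⟶ Q
  π : Q ⟶ X
  projP : Projective P
  projQ : Projective Q
  w : f ≫ π = 0
  shortExact : (ShortComplex.mk f π w).ShortExact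

/-- Minimality of a projective resolution. -/
def ProjRes.Minimal {X : A} (r : ProjRes X) : Prop := IsMinimalMap r.f

/-- The two-periodic complex `C_X = (P_X ⇄ Q_X)` (`d₁ = f`, `d₀ = 0`)
associated to a projective resolution of `X`. -/
def ProjRes.cplx {X : A} (r : ProjRes X) : TwoComplex A :=
  ⟨r.P, r.Q, r.f, 0, by simp, by simp⟩

end

/-- Hereditary: subobjects of projective objects are projective. -/
def Hereditary (A : Type u) [Category.{v} A] [Abelian A] : Prop :=
  ∀ (X P : A) (f : X ⟶ P), Projective P → Mono f → Projective X

/-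
Since `C_X` has `d₀ = 0`, so do its subcomplex `N` and its quotient `M`, and each of them is `C_B`
for `B = coker d₁` as soon as `d₁` is a monomorphism. For `N` this is inherited from `f_X`. For `M`,
either `H₁(M) = 0`, or the `E₀` condition gives `H₀(N) = 0`, so that `d₁` of `N` is an isomorphism
and the snake lemma embeds `ker d₁` of `M` into `coker d₁` of `N`, which is zero.
A map `f : P ⟶ Q` is minimal iff there is no indecomposable `R` with `s : R ⟶ P`, `r : Q ⟶ R` and
`s ≫ f ≫ r = 𝟙`, i.e. no split summand `K_R` of the complex. Such a pair for `M` lifts to `C_X`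
because `R`, a retract of `M.X₁`, is projective; one for `N` is pushed to `C_X` through a retraction
of the degree-0 inclusion, which splits because `M.X₀` is projective.
-/

section

variable {A : Type u} [Category.{v} A] [Abelian A]

lemma exists_biprod_iso_of_retraction {R P : A} (t : R ⟶ P) (u : P ⟶ R) (h : t ≫ u = 𝟙 R) :
    ∃ (K : A) (e : P ≅ R ⊞ K), biprod.inl ≫ e.inv = t ∧ e.hom ≫ biprod.fst = u :=
  let s := ShortComplex.Splitting.ofExactOfRetraction _
    (ShortComplex.cokernelSequence_exact t) u h inferInstance
  ⟨_, s.isoBinaryBiproduct, biprod.inl_desc _ _, biprod.lift_fst _ _⟩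

lemma not_isMinimalMap_of_comp_eq_id {P Q R : A} (f : P ⟶ Q) (hR : Indec R) (s : R ⟶ P)
    (r : Q ⟶ R) (h : s ≫ f ≫ r = 𝟙 R) : ¬ IsMinimalMap f := by
  obtain ⟨K, eP, heP, -⟩ := exists_biprod_iso_of_retraction s (f ≫ r) h
  obtain ⟨K', eQ, -, heQ⟩ :=
    exists_biprod_iso_of_retraction (s ≫ f) r (by rw [Category.assoc, h])
  intro hmin
  apply hmin R K R K' eP eQ hR hR
  rw [heQ, reassoc_of% heP, h]
  infer_instance

lemma isMinimalMap_iff {P Q : A} (f : P ⟶ Q) :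
    IsMinimalMap f ↔ ∀ (R : A) (s : R ⟶ P) (r : Q ⟶ R), Indec R → s ≫ f ≫ r ≠ 𝟙 R := by
  refine ⟨fun hmin R s r hR h => not_isMinimalMap_of_comp_eq_id f hR s r h hmin, ?_⟩
  intro h P₁ _ _ _ eP eQ hP₁ _ hiso
  set c := biprod.inl ≫ eP.inv ≫ f ≫ eQ.hom ≫ biprod.fst with hc
  refine h P₁ (biprod.inl ≫ eP.inv) (eQ.hom ≫ biprod.fst ≫ inv c) hP₁ ?_
  simpa only [hc, Category.assoc] using IsIso.hom_inv_id c

end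

namespace TwoComplex

variable {A : Type u} [Category.{v} A] [Abelian A]

lemma isMinimalMap_d₁_of_epi {L M : TwoComplex A} (p : L ⟶ M) [Epi p.f₁]
    (hM : Projective M.X₁) (hL : IsMinimalMap L.d₁) : IsMinimalMap M.d₁ := by
  rw [isMinimalMap_iff] at hL ⊢
  intro R s r hR h
  have : Projective R := Retract.projective ⟨s, M.d₁ ≫ r, h⟩
  refine hL R (Projective.factorThru s p.f₁) (p.f₀ ≫ r) hR ?_
  rw [← Category.assoc L.d₁, p.comm₁, Category.assoc, Projective.factorThru_comp_assoc, h]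

lemma isMinimalMap_d₁_of_isSplitMono {N L : TwoComplex A} (i : N ⟶ L) [IsSplitMono i.f₀]
    (hL : IsMinimalMap L.d₁) : IsMinimalMap N.d₁ := by
  rw [isMinimalMap_iff] at hL ⊢
  intro R s r hR h
  refine hL R (s ≫ i.f₁) (retraction i.f₀ ≫ r) hR ?_
  rw [Category.assoc, ← reassoc_of% i.comm₁, IsSplitMono.id_assoc, h]

lemma d₀_eq_zero_of_epi {L M : TwoComplex A} (p : L ⟶ M) [Epi p.f₀] (hL : L.d₀ = 0) :
    M.d₀ = 0 := by
  rw [← cancel_epi p.f₀, comp_zero, ← p.comm₀, hL, zero_comp]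

lemma d₀_eq_zero_of_mono {N L : TwoComplex A} (i : N ⟶ L) [Mono i.f₁] (hL : L.d₀ = 0) :
    N.d₀ = 0 := by
  rw [← cancel_mono i.f₁, zero_comp, i.comm₀, hL, comp_zero]

lemma mono_d₁_of_mono {N L : TwoComplex A} (i : N ⟶ L) [Mono i.f₁] [Mono L.d₁] :
    Mono N.d₁ :=
  mono_of_mono_fac i.comm₁

lemma mono_d₁_of_isZero_H₁ {M : TwoComplex A} (hd₀ : M.d₀ = 0) (h : IsZero M.H₁) :
    Mono M.d₁ :=
  ((ShortComplex.exact_iff_isZero_homology _).2 h).mono_g hd₀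

lemma epi_d₁_of_isZero_H₀ {M : TwoComplex A} (hd₀ : M.d₀ = 0) (h : IsZero M.H₀) :
    Epi M.d₁ :=
  ((ShortComplex.exact_iff_isZero_homology _).2 h).epi_f hd₀

lemma mono_d₁_of_isShortExact {N L M : TwoComplex A} {i : N ⟶ L} {p : L ⟶ M}
    (hses : IsShortExact i p) [Mono L.d₁] [IsIso N.d₁] (hM : Projective M.X₁) :
    Mono M.d₁ := by
  obtain ⟨w₁, _, hse₁, hse₀⟩ := hses
  have := hse₁.epi_g
  have := hse₀.mono_f
  obtain ⟨σ, hσ⟩ := Projective.factors (𝟙 M.X₁) p.f₁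
  refine Preadditive.mono_of_cancel_zero _ fun {T} g hg => ?_
  have hg' : (g ≫ σ ≫ L.d₁) ≫ p.f₀ = 0 := by
    rw [Category.assoc, Category.assoc, p.comm₁, reassoc_of% hσ, hg]
  obtain ⟨l, hl⟩ : ∃ l, l ≫ i.f₀ = g ≫ σ ≫ L.d₁ := ⟨_, hse₀.exact.lift_f _ hg'⟩
  have hgσ : g ≫ σ = l ≫ inv N.d₁ ≫ i.f₁ := by
    rw [← cancel_mono L.d₁, Category.assoc, ← hl, Category.assoc, Category.assoc, ← i.comm₁,
      IsIso.inv_hom_id_assoc]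
  calc g = (g ≫ σ) ≫ p.f₁ := by rw [Category.assoc, hσ, Category.comp_id]
    _ = 0 := by simp only [hgσ, Category.assoc, w₁, comp_zero]

lemma exists_minimal_projRes_iso_of_d₀_eq_zero (M : TwoComplex A) (hM : ProjTerms M)
    (hd₀ : M.d₀ = 0) [Mono M.d₁] (hmin : IsMinimalMap M.d₁) :
    ∃ (B : A) (rB : ProjRes B), rB.Minimal ∧ Nonempty (M ≅ rB.cplx) := by
  refine ⟨cokernel M.d₁, ⟨M.X₁, M.X₀, M.d₁, cokernel.π _, hM.1, hM.2, cokernel.condition _,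
    { exact := ShortComplex.cokernelSequence_exact _ }⟩, hmin, ⟨?_⟩⟩
  exact { hom := ⟨𝟙 _, 𝟙 _, by simp [ProjRes.cplx], by simp [ProjRes.cplx, hd₀]⟩
          inv := ⟨𝟙 _, 𝟙 _, by simp [ProjRes.cplx], by simp [ProjRes.cplx, hd₀]⟩
          hom_inv_id := Hom.ext (Category.comp_id _) (Category.comp_id _)
          inv_hom_id := Hom.ext (Category.comp_id _) (Category.comp_id _) }

end TwoComplex

/-- Let `A` be hereditary with enough projectives, `X ∈ A`
with minimal projective resolution giving `C_X`, and let
`0 → N• → C_X → M• → 0` be a short exact sequence in `C(P)` satisfying the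
`E₀` condition `H_i(M•) ≠ 0 ⟹ H_{i+1}(N•) = 0`.  Then `M• ≅ C_B` and
`N• ≅ C_D` for objects `B`, `D` with minimal projective resolutions. -/
theorem conflation_under_CA_has_resolution_ends
    {A : Type u} [Category.{v} A] [Abelian A]
    [∀ X Y : A, Fintype (X ⟶ Y)] [EnoughProjectives A]
    (hH : Hereditary A)
    (X : A) (r : ProjRes X) (hr : r.Minimal)
    (N M : TwoComplex A) (i : N ⟶ r.cplx) (p : r.cplx ⟶ M)
    (hN : ProjTerms N) (hM : ProjTerms M)
    (hses : IsShortExact i p) (hcond : E0Cond N M) :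
    (∃ (B : A) (rB : ProjRes B), rB.Minimal ∧ Nonempty (M ≅ rB.cplx))
    ∧ (∃ (D : A) (rD : ProjRes D), rD.Minimal ∧ Nonempty (N ≅ rD.cplx)) := by
  have ⟨_, _, hse₁, hse₀⟩ := hses
  have := hse₁.mono_f
  have := hse₁.epi_g
  have := hse₀.mono_f
  have := hse₀.epi_g
  have := hM.2
  have : Mono r.cplx.d₁ := r.shortExact.mono_f
  have hMd₀ : M.d₀ = 0 := d₀_eq_zero_of_epi p rfl
  have hNd₀ : N.d₀ = 0 := d₀_eq_zero_of_mono i rfl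
  have : Mono N.d₁ := mono_d₁_of_mono i
  have : Mono M.d₁ := by
    by_cases hH₁ : IsZero M.H₁
    · exact mono_d₁_of_isZero_H₁ hMd₀ hH₁
    · have : Epi N.d₁ := epi_d₁_of_isZero_H₀ hNd₀ (hcond.2 hH₁)
      have : IsIso N.d₁ := isIso_of_mono_of_epi _
      exact mono_d₁_of_isShortExact hses hM.1
  have : IsSplitMono i.f₀ := hse₀.splittingOfProjective.isSplitMono_f
  exact ⟨exists_minimal_projRes_iso_of_d₀_eq_zero M hM hMd₀ (isMinimalMap_d₁_of_epi p hM.1 hr),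
    exists_minimal_projRes_iso_of_d₀_eq_zero N hN hNd₀ (isMinimalMap_d₁_of_isSplitMono i hr)⟩
end
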